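/- arXiv:cs/0601026 — 5 statements merged into one kernel-verified Lean document; each statement's English description precedes it below -/
import Mathlib

section
/- Generalized Laplace expansion: for an n×n matrix M over a commutative ring and a fixed nonempty proper subset I of rows, det M equals the sum over all column subsets J with |J| = |I| of (−1)^{Σ_{i∈I} i + Σ_{j∈J} j} · det M[I,J] · det M[Ī, J̄], where M[I,J] is the submatrix with rows I and columns J, and Ī, J̄ are the complements. -/
/-!
Sorting the permutations `σ` of the Leibniz expansion of `det M` by the column set `J = σ⁻¹ I`,
those with a given `J` are exactly the permutations contributing to the determinant of the
matrix that keeps only the entries linking `I` to `J` and `Iᶜ` to `Jᶜ`. Listing the rows as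
`I, Iᶜ` and the columns as `J, Jᶜ` (each in increasing order) makes that matrix block diagonal,
at the cost of the sign of the permutation carrying one listing to the other.

That sign is computed against the reference listing `0, …, n-1`: the listing `S, Sᶜ` of
`S = {s₀ < ⋯ < s_{k-1}}` has one inversion for each pair `t < s_a` with `t ∉ S`, and there are
`s_a - a` of them, so its sign is `(-1)^(Σ S - Σ_{a<k} a)`. The correction `Σ_{a<k} a` depends
only on `k` and cancels between `I` and `J`.
-/

open Matrix Finset Equiv

theorem Equiv.Perm.sign_symm_trans_eq_prod {α : Type*} [Fintype α] {n : ℕ}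
    (f g : α ≃ Fin n) :
    Perm.sign (g.symm.trans f) = ∏ x, ∏ y, if g x < g y ∧ f y < f x then -1 else 1 := by
  rw [Perm.sign_eq_prod_prod_Ioi, ← g.prod_comp]
  refine Fintype.prod_congr _ _ fun x => ?_
  rw [← filter_lt_eq_Ioi, prod_filter, ← g.prod_comp]
  refine Fintype.prod_congr _ _ fun y => ?_
  simp only [trans_apply, symm_apply_apply]
  by_cases hxy : g x < g y
  · rcases lt_or_gt_of_ne (f.injective.ne (g.injective.ne_iff.mp hxy.ne)) with h | h <;>
      simp [hxy, h, h.not_gt]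
  · simp [hxy]

theorem Fin.neg_one_pow_val_eq_prod {n : ℕ} (i : Fin n) :
    (-1 : ℤˣ) ^ (i : ℕ) = ∏ j : Fin n, if j < i then -1 else 1 := by
  rw [prod_ite, prod_const_one, mul_one, Finset.prod_const, filter_gt_eq_Iio, Fin.card_Iio]

section Shuffle

variable {n k m : ℕ}

theorem sign_finSumFinEquiv_symm_trans_finSumEquivOfFinset {S : Finset (Fin n)} (hS : #S = k)
    (hSc : #Sᶜ = m) (h : k + m = n) :
    Perm.sign ((finSumFinEquiv.trans (finCongr h)).symm.trans (finSumEquivOfFinset hS hSc)) =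
      ∏ a : Fin k, ∏ b : Fin m,
        if Sᶜ.orderEmbOfFin hSc b < S.orderEmbOfFin hS a then -1 else 1 := by
  have castAdd_lt_natAdd (a : Fin k) (b : Fin m) : Fin.castAdd m a < Fin.natAdd k b := by
    simp only [Fin.lt_def, Fin.val_castAdd, Fin.val_natAdd]; omega
  have castAdd_lt_castAdd (a b : Fin k) : Fin.castAdd m a < Fin.castAdd m b ↔ a < b := Iff.rfl
  have not_lt_and_gt {j : ℕ} (a b : Fin j) : ¬(a < b ∧ b < a) := fun h => lt_asymm h.1 h.2
  rw [Perm.sign_symm_trans_eq_prod]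
  simp only [Fintype.prod_sum_type, finSumEquivOfFinset_inl, finSumEquivOfFinset_inr,
    trans_apply, finSumFinEquiv_apply_left, finSumFinEquiv_apply_right]
  simp [castAdd_lt_natAdd, fun a b => (castAdd_lt_natAdd a b).not_gt, castAdd_lt_castAdd,
    not_lt_and_gt]

theorem sign_finSumFinEquiv_symm_trans_finSumEquivOfFinset_mul {S : Finset (Fin n)}
    (hS : #S = k) (hSc : #Sᶜ = m) (h : k + m = n) :
    Perm.sign ((finSumFinEquiv.trans (finCongr h)).symm.trans (finSumEquivOfFinset hS hSc)) *
      (-1) ^ ∑ a : Fin k, (a : ℕ) = (-1) ^ ∑ s ∈ S, (s : ℕ) := by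
  rw [sign_finSumFinEquiv_symm_trans_finSumEquivOfFinset, ← prod_pow_eq_pow_sum,
    ← prod_pow_eq_pow_sum, ← prod_mul_distrib]
  conv_rhs => rw [← S.map_orderEmbOfFin_univ hS, prod_map]
  refine Fintype.prod_congr _ _ fun a => ?_
  -- split the points below `s_a` into those of `Sᶜ` and those of `S`, i.e. the `s_b` with `b < a`
  rw [Fin.neg_one_pow_val_eq_prod, Fin.neg_one_pow_val_eq_prod,
    ← (finSumEquivOfFinset hS hSc).prod_comp, Fintype.prod_sum_type, mul_comm]
  congr 1
  simp

theorem sign_finSumEquivOfFinset_symm_trans {I J : Finset (Fin n)} (hI : #I = k) (hIc : #Iᶜ = m)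
    (hJ : #J = k) (hJc : #Jᶜ = m) :
    Perm.sign ((finSumEquivOfFinset hI hIc).symm.trans (finSumEquivOfFinset hJ hJc)) =
      (-1) ^ (∑ i ∈ I, (i : ℕ) + ∑ j ∈ J, (j : ℕ)) := by
  have h : k + m = n := by rw [← hI, ← hIc, card_add_card_compl, Fintype.card_fin]
  set g := finSumFinEquiv.trans (finCongr h)
  set c : ℤˣ := (-1) ^ ∑ a : Fin k, (a : ℕ)
  have hdecomp : (finSumEquivOfFinset hI hIc).symm.trans (finSumEquivOfFinset hJ hJc) =
      g.symm.trans (finSumEquivOfFinset hJ hJc) *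
        (g.symm.trans (finSumEquivOfFinset hI hIc))⁻¹ := by
    ext x; simp [Perm.mul_apply]
  calc Perm.sign ((finSumEquivOfFinset hI hIc).symm.trans (finSumEquivOfFinset hJ hJc))
      = Perm.sign (g.symm.trans (finSumEquivOfFinset hI hIc)) * c *
          (Perm.sign (g.symm.trans (finSumEquivOfFinset hJ hJc)) * c) := by
        rw [hdecomp, Perm.sign_mul, Perm.sign_inv, mul_mul_mul_comm, Int.units_mul_self, mul_one,
          mul_comm]
    _ = (-1) ^ (∑ i ∈ I, (i : ℕ) + ∑ j ∈ J, (j : ℕ)) := by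
        rw [sign_finSumFinEquiv_symm_trans_finSumEquivOfFinset_mul,
          sign_finSumFinEquiv_symm_trans_finSumEquivOfFinset_mul, pow_add]

end Shuffle

namespace Matrix

variable {ι κ R : Type*} [CommRing R]

def blockDiagPart [DecidableEq ι] [DecidableEq κ] (M : Matrix ι κ R) (I : Finset ι)
    (J : Finset κ) : Matrix ι κ R :=
  of fun i j => if (i ∈ I ↔ j ∈ J) then M i j else 0

theorem det_blockDiagPart [Fintype ι] [DecidableEq ι] (M : Matrix ι ι R) (I J : Finset ι) :
    (M.blockDiagPart I J).det =
      ∑ σ : Perm ι with ∀ i, σ i ∈ I ↔ i ∈ J, Perm.sign σ • ∏ i, M (σ i) i := by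
  rw [det_apply, sum_filter]
  refine sum_congr rfl fun σ _ => ?_
  split_ifs with hσ
  · simp [blockDiagPart, hσ]
  · obtain ⟨i, hi⟩ := not_forall.mp hσ
    rw [prod_eq_zero (mem_univ i) (by simp [blockDiagPart, hi]), smul_zero]

theorem det_eq_sum_det_blockDiagPart [Fintype ι] [DecidableEq ι] (M : Matrix ι ι R)
    (I : Finset ι) : M.det = ∑ J ∈ univ.powersetCard #I, (M.blockDiagPart I J).det := by
  rw [det_apply, ← sum_fiberwise_of_maps_to (g := fun σ : Perm ι => I.map σ.symm.toEmbedding)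
    (t := univ.powersetCard #I) fun σ _ => mem_powersetCard_univ.mpr (card_map _)]
  refine sum_congr rfl fun J _ => ?_
  rw [det_blockDiagPart]
  refine sum_congr (filter_congr fun σ _ => ?_) fun _ _ => rfl
  simp [Finset.ext_iff, mem_map_equiv]

theorem det_submatrix_equiv_equiv [Fintype ι] [DecidableEq ι] [Fintype κ] [DecidableEq κ]
    (e₁ e₂ : κ ≃ ι) (A : Matrix ι ι R) :
    (A.submatrix e₁ e₂).det = Perm.sign (e₁.symm.trans e₂) * A.det := by
  have : A.submatrix e₁ e₂ = (A.submatrix id (e₁.symm.trans e₂)).submatrix e₁ e₁ := by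
    ext; simp
  rw [this, det_submatrix_equiv_self, det_permute']

theorem blockDiagPart_submatrix_finSumEquivOfFinset [Fintype ι] [DecidableEq ι] [LinearOrder ι]
    [Fintype κ] [DecidableEq κ] [LinearOrder κ] {k m : ℕ} (M : Matrix ι κ R) {I : Finset ι}
    {J : Finset κ} (hI : #I = k) (hIc : #Iᶜ = m) (hJ : #J = k) (hJc : #Jᶜ = m) :
    (M.blockDiagPart I J).submatrix (finSumEquivOfFinset hI hIc) (finSumEquivOfFinset hJ hJc) =
      fromBlocks (M.submatrix (I.orderEmbOfFin hI) (J.orderEmbOfFin hJ)) 0 0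
        (M.submatrix (Iᶜ.orderEmbOfFin hIc) (Jᶜ.orderEmbOfFin hJc)) := by
  have hIc' (a : Fin m) : Iᶜ.orderEmbOfFin hIc a ∉ I := mem_compl.mp (orderEmbOfFin_mem _ _ a)
  have hJc' (b : Fin m) : Jᶜ.orderEmbOfFin hJc b ∉ J := mem_compl.mp (orderEmbOfFin_mem _ _ b)
  ext (a | a) (b | b) <;> simp [blockDiagPart, hIc', hJc']

theorem det_blockDiagPart_eq_neg_one_pow_mul {n k m : ℕ} (M : Matrix (Fin n) (Fin n) R)
    {I J : Finset (Fin n)} (hI : #I = k) (hIc : #Iᶜ = m) (hJ : #J = k) (hJc : #Jᶜ = m) :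
    (M.blockDiagPart I J).det = (-1) ^ (∑ i ∈ I, (i : ℕ) + ∑ j ∈ J, (j : ℕ)) *
      (M.submatrix (I.orderEmbOfFin hI) (J.orderEmbOfFin hJ)).det *
      (M.submatrix (Iᶜ.orderEmbOfFin hIc) (Jᶜ.orderEmbOfFin hJc)).det := by
  have h := det_submatrix_equiv_equiv (finSumEquivOfFinset hI hIc) (finSumEquivOfFinset hJ hJc)
    (M.blockDiagPart I J)
  rw [blockDiagPart_submatrix_finSumEquivOfFinset, det_fromBlocks_zero₂₁,
    sign_finSumEquivOfFinset_symm_trans] at h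
  push_cast at h
  rw [mul_assoc, h, ← mul_assoc, ← mul_pow, neg_one_mul, neg_neg, one_pow, one_mul]

end Matrix

/-- Generalized Laplace expansion: for an `n × n` matrix `M` over a commutative
ring and a fixed nonempty proper subset `I` of rows, `det M` is the sum over all
column subsets `J` with `|J| = |I|` of
`(-1)^(Σ_{i∈I} i + Σ_{j∈J} j) ⬝ det M[I,J] ⬝ det M[Iᶜ,Jᶜ]`. -/
theorem generalized_laplace_expansion {R : Type*} [CommRing R] {n : ℕ}
    (M : Matrix (Fin n) (Fin n) R) (I : Finset (Fin n)) :
    M.det = ∑ J ∈ (Finset.univ : Finset (Fin n)).powersetCard I.card,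
      if h : J.card = I.card then
        (-1 : R) ^ (∑ i ∈ I, (i : ℕ) + ∑ j ∈ J, (j : ℕ)) *
          (M.submatrix (fun a : Fin I.card => I.orderEmbOfFin rfl a)
            (fun b : Fin I.card => J.orderEmbOfFin h b)).det *
          (M.submatrix (fun a : Fin Iᶜ.card => Iᶜ.orderEmbOfFin rfl a)
            (fun b : Fin Iᶜ.card => Jᶜ.orderEmbOfFin
              (by simp [Finset.card_compl, h]) b)).det
      else 0 := by
  rw [det_eq_sum_det_blockDiagPart M I]
  refine sum_congr rfl fun J hJmem => ?_
  have hJ : #J = #I := mem_powersetCard_univ.mp hJmem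
  rw [dif_pos hJ]
  exact det_blockDiagPart_eq_neg_one_pow_mul M rfl rfl hJ (by simp [card_compl, hJ])
end

section
/- Jacobi's theorem for 2×2 minors: let Z be an invertible n×n matrix over a field and let i ≠ j. Then det of the submatrix of Z⁻¹ with rows and columns {i,j} equals det(Z with rows {i,j} and columns {i,j} deleted) / det Z, up to sign; in particular, the principal minor of Z obtained by deleting rows and columns {i,j} is invertible if and only if det (Z⁻¹)[{i,j},{i,j}] ≠ 0. -/
open Matrix

lemma jacobi_block {F : Type*} [Field F] {α β : Type*} [Fintype α] [Fintype β]
    [DecidableEq α] [DecidableEq β] (M : Matrix (α ⊕ β) (α ⊕ β) F) (hM : IsUnit M.det) :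
    M.det * ((M⁻¹).toBlocks₁₁).det = (M.toBlocks₂₂).det := by
  have h := Matrix.mul_nonsing_inv M hM
  set A := M.toBlocks₁₁ with hA
  set B := M.toBlocks₁₂ with hB
  set C := M.toBlocks₂₁ with hC
  set D := M.toBlocks₂₂ with hD
  set P := (M⁻¹).toBlocks₁₁ with hP
  set Q := (M⁻¹).toBlocks₁₂ with hQ
  set R := (M⁻¹).toBlocks₂₁ with hR
  set T := (M⁻¹).toBlocks₂₂ with hT
  have hM1 : M = fromBlocks A B C D := (fromBlocks_toBlocks M).symm
  have hMi : M⁻¹ = fromBlocks P Q R T := (fromBlocks_toBlocks (M⁻¹)).symm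
  rw [hMi] at h
  rw [hM1, fromBlocks_multiply, ← fromBlocks_one] at h
  have h11 : A * P + B * R = 1 := by
    have := congrArg Matrix.toBlocks₁₁ h
    simp only [Matrix.toBlocks_fromBlocks₁₁] at this
    exact this
  have h21 : C * P + D * R = 0 := by
    have := congrArg Matrix.toBlocks₂₁ h
    simp only [Matrix.toBlocks_fromBlocks₂₁] at this
    exact this
  have key : M * fromBlocks P 0 R 1 = fromBlocks 1 B 0 D := by
    rw [hM1, fromBlocks_multiply, h11, h21]
    congr 1 <;> simp
  have hdet := congrArg Matrix.det key
  rw [det_mul, det_fromBlocks_zero₁₂, det_fromBlocks_zero₂₁, det_one, det_one, mul_one,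
    one_mul] at hdet
  exact hdet

/-- Jacobi's theorem for 2×2 minors: for an invertible `Z` and distinct indices
`i ≠ j`, the determinant of the 2×2 submatrix of `Z⁻¹` on rows/columns `{i,j}`
equals, up to sign, the determinant of `Z` with rows and columns `i, j` deleted,
divided by `det Z`; in particular that principal minor of `Z` is invertible iff
`det (Z⁻¹)[{i,j},{i,j}] ≠ 0`. -/
theorem jacobi_two_by_two {F : Type*} [Field F] {n : ℕ}
    (Z : Matrix (Fin n) (Fin n) F) (hZ : IsUnit Z.det)
    (i j : Fin n) (hij : i ≠ j) :
    (∃ ε : F, (ε = 1 ∨ ε = -1) ∧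
      Matrix.det !![Z⁻¹ i i, Z⁻¹ i j; Z⁻¹ j i, Z⁻¹ j j] =
        ε * (Z.submatrix (fun a : Fin ({i, j}ᶜ : Finset (Fin n)).card =>
              ({i, j}ᶜ : Finset (Fin n)).orderEmbOfFin rfl a)
            (fun b : Fin ({i, j}ᶜ : Finset (Fin n)).card =>
              ({i, j}ᶜ : Finset (Fin n)).orderEmbOfFin rfl b)).det / Z.det) ∧
    (IsUnit (Z.submatrix (fun a : Fin ({i, j}ᶜ : Finset (Fin n)).card =>
              ({i, j}ᶜ : Finset (Fin n)).orderEmbOfFin rfl a)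
            (fun b : Fin ({i, j}ᶜ : Finset (Fin n)).card =>
              ({i, j}ᶜ : Finset (Fin n)).orderEmbOfFin rfl b)).det ↔
      Matrix.det !![Z⁻¹ i i, Z⁻¹ i j; Z⁻¹ j i, Z⁻¹ j j] ≠ 0) := by
  classical
  set m := ({i, j}ᶜ : Finset (Fin n)).card with hm
  set emb : Fin m → Fin n := fun b => ({i, j}ᶜ : Finset (Fin n)).orderEmbOfFin rfl b with hemb
  set D := Z.submatrix emb emb with hDdef
  -- build the equivalence
  have hcard2 : ({i, j} : Finset (Fin n)).card = 2 := by
    rw [Finset.card_insert_of_notMem (by simp [hij]), Finset.card_singleton]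
  have hn2 : 2 ≤ n := by
    have h1 : ({i, j} : Finset (Fin n)).card ≤ Fintype.card (Fin n) := Finset.card_le_univ _
    simpa [hcard2] using h1
  have hmval : m = n - 2 := by
    rw [hm, Finset.card_compl, hcard2, Fintype.card_fin]
  let f : Fin 2 ⊕ Fin m → Fin n := Sum.elim ![i, j] emb
  have hmemb : ∀ b, emb b ∈ ({i, j}ᶜ : Finset (Fin n)) := fun b =>
    Finset.orderEmbOfFin_mem _ rfl b
  have hinj : Function.Injective f := by
    rintro (a | a) (b | b) hab
    · fin_cases a <;> fin_cases b <;> simp_all [f] <;> exact absurd hab.symm hij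
    · exfalso
      simp only [f, Sum.elim_inl, Sum.elim_inr] at hab
      have hb := hmemb b
      rw [Finset.mem_compl] at hb
      apply hb
      rw [← hab]
      fin_cases a <;> simp
    · exfalso
      simp only [f, Sum.elim_inl, Sum.elim_inr] at hab
      have hb := hmemb a
      rw [Finset.mem_compl] at hb
      apply hb
      rw [hab]
      fin_cases b <;> simp
    · simpa [f] using (({i, j}ᶜ : Finset (Fin n)).orderEmbOfFin rfl).injective hab
  have hbij : Function.Bijective f := by
    rw [Fintype.bijective_iff_injective_and_card]
    refine ⟨hinj, ?_⟩
    simp only [Fintype.card_sum, Fintype.card_fin]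
    omega
  let φ : (Fin 2 ⊕ Fin m) ≃ Fin n := Equiv.ofBijective f hbij
  set M := Z.submatrix φ φ with hMdef
  have hMdet : M.det = Z.det := det_submatrix_equiv_self φ Z
  have hMunit : IsUnit M.det := hMdet ▸ hZ
  have hMinv : M⁻¹ = (Z⁻¹).submatrix φ φ := inv_submatrix_equiv Z φ φ
  have hB22 : M.toBlocks₂₂ = D := by
    ext a b
    rfl
  have hB11 : (M⁻¹).toBlocks₁₁ = !![Z⁻¹ i i, Z⁻¹ i j; Z⁻¹ j i, Z⁻¹ j j] := by
    rw [hMinv]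
    ext a b
    fin_cases a <;> fin_cases b <;>
      simp [Matrix.toBlocks₁₁, φ, f, Equiv.ofBijective] <;> rfl
  have key := jacobi_block M hMunit
  rw [hB11, hB22, hMdet] at key
  have hZne : Z.det ≠ 0 := hZ.ne_zero
  have hmain : Matrix.det !![Z⁻¹ i i, Z⁻¹ i j; Z⁻¹ j i, Z⁻¹ j j] = D.det / Z.det := by
    rw [eq_div_iff hZne]
    linear_combination key
  refine ⟨⟨1, Or.inl rfl, by rw [one_mul]; exact hmain⟩, ?_⟩
  rw [isUnit_iff_ne_zero, hmain]
  constructor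
  · intro h
    exact div_ne_zero h hZne
  · intro h hD0
    exact h (by rw [hD0, zero_div])
end

section
/- Let Z be an invertible n×n matrix over a field, i, j distinct indices with (Z⁻¹)_{j,i} ≠ 0. Then the inverse of the minor obtained by deleting row i and column j of Z equals the matrix N − N_{*,i}·(N_{j,i})⁻¹·N_{j,*} (where N = Z⁻¹), with row j and column i deleted. -/
/-!
Let `P := N - N_{*,i} (N_{j,i})⁻¹ N_{j,*}`. Row `j` of `P` vanishes, and
`Z P = 1 - (N_{j,i})⁻¹ e_i N_{j,*}` agrees with the identity outside row `i`. Splitting the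
product `Z P` into the contribution of index `j` and that of all other indices, the row-`j`
term drops out, so deleting row `i` and column `j` of `Z` and row `j` and column `i` of `P`
leaves two matrices whose product is the identity.
-/

open Matrix

namespace Matrix

variable {l m o p α : Type*} [NonUnitalNonAssocSemiring α] {n : ℕ}

theorem submatrix_succAbove_mul_add_vecMulVec
    (A : Matrix l (Fin (n + 1)) α) (B : Matrix (Fin (n + 1)) o α)
    (r : m → l) (c : p → o) (j : Fin (n + 1)) :
    A.submatrix r j.succAbove * B.submatrix j.succAbove c +
        vecMulVec (fun k => A (r k) j) (fun k => B j (c k)) =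
      (A * B).submatrix r c := by
  ext a b
  simp only [add_apply, mul_apply, submatrix_apply, vecMulVec_apply, Fin.sum_univ_succAbove _ j]
  exact add_comm _ _

end Matrix

theorem minor_inverse_rank_one_update_general {F : Type*} [Field F] {n : ℕ}
    (Z : Matrix (Fin (n + 1)) (Fin (n + 1)) F) (hZ : IsUnit Z.det)
    (i j : Fin (n + 1)) (N : Matrix (Fin (n + 1)) (Fin (n + 1)) F)
    (hN : N = Z⁻¹) (hji : N j i ≠ 0) :
    (Z.submatrix i.succAbove j.succAbove)⁻¹ =
      (N - (N j i)⁻¹ •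
          Matrix.vecMulVec (fun k => N k i) (fun l => N j l)).submatrix
        j.succAbove i.succAbove := by
  set P := N - (N j i)⁻¹ • vecMulVec (fun k => N k i) (fun l => N j l)
  have hP_row : P j = 0 := by
    ext l
    simp [P, vecMulVec_apply, hji]
  have hZP : (Z * P).submatrix i.succAbove i.succAbove = 1 := by
    have hZN : Z * N = 1 := hN ▸ mul_nonsing_inv Z hZ
    have hcol : (fun k => N k i) = N *ᵥ Pi.single i 1 := (mulVec_single_one N i).symm
    rw [Matrix.mul_sub, Matrix.mul_smul, mul_vecMulVec, hcol, mulVec_mulVec, hZN, one_mulVec]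
    ext a b
    simp [one_apply, vecMulVec_apply, Fin.succAbove_ne]
  apply inv_eq_right_inv
  have hsplit := submatrix_succAbove_mul_add_vecMulVec Z P i.succAbove i.succAbove j
  simpa [hZP, hP_row, ← Pi.zero_def] using hsplit

/-- Inverse of the minor via a rank-1 update of `N = Z⁻¹`: if `N j i ≠ 0`, then
the inverse of the matrix obtained from `Z` by deleting row `i` and column `j`
equals `N - N_{*,i} (N j i)⁻¹ N_{j,*}` with row `j` and column `i` deleted. -/
theorem minor_inverse_rank_one_update {F : Type*} [Field F] {n : ℕ}
    (Z : Matrix (Fin (n + 1)) (Fin (n + 1)) F) (hZ : IsUnit Z.det)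
    (i j : Fin (n + 1)) (hij : i ≠ j) (N : Matrix (Fin (n + 1)) (Fin (n + 1)) F)
    (hN : N = Z⁻¹) (hji : N j i ≠ 0) :
    (Z.submatrix i.succAbove j.succAbove)⁻¹ =
      (N - (N j i)⁻¹ •
          Matrix.vecMulVec (fun k => N k i) (fun l => N j l)).submatrix
        j.succAbove i.succAbove :=
  minor_inverse_rank_one_update_general Z hZ i j N hN hji
end

section
/- Sequential Update Lemma: let X and Y be n×n matrices over a field with Y strictly upper triangular. Define X⁽⁰⁾ = X and X⁽ⁱ⁾ = X⁽ⁱ⁻¹⁾ + X⁽ⁱ⁻¹⁾_{*,i} · Y_{i,*} for 1 ≤ i ≤ n, where X_{*,i} is the i-th column and Y_{i,*} the i-th row. Then X⁽ⁿ⁾ = X · (I − Y)⁻¹. -/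
open Matrix

/-- Sequential Update Lemma: with `Y` strictly upper triangular, performing the
sequence of rank-1 updates `X⁽ⁱ⁾ = X⁽ⁱ⁻¹⁾ + X⁽ⁱ⁻¹⁾_{*,i} · Y_{i,*}` for
`i = 1, …, n` yields `X⁽ⁿ⁾ = X · (I − Y)⁻¹`. -/
theorem sequential_update_lemma {F : Type*} [Field F] {n : ℕ}
    (X Y : Matrix (Fin n) (Fin n) F)
    (hY : ∀ i j : Fin n, j ≤ i → Y i j = 0)
    (Xs : ℕ → Matrix (Fin n) (Fin n) F)
    (h0 : Xs 0 = X)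
    (hstep : ∀ i : Fin n, Xs ((i : ℕ) + 1) =
      Xs (i : ℕ) + Matrix.vecMulVec (fun k => Xs (i : ℕ) k i) (fun l => Y i l)) :
    Xs n = X * (1 - Y)⁻¹ := by
  -- column j stabilizes from time j on
  have stab : ∀ (j : Fin n) (m : ℕ), (j : ℕ) ≤ m → m ≤ n → ∀ k,
      Xs m k j = Xs (j : ℕ) k j := by
    intro j m
    induction m with
    | zero =>
      intro h _ k
      have : (j : ℕ) = 0 := Nat.le_zero.mp h
      rw [this]
    | succ m ih =>
      intro hjm hmn k
      rcases Nat.lt_or_ge (j : ℕ) (m + 1) with h | h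
      · have hm : m < n := lt_of_lt_of_le (Nat.lt_succ_self m) hmn
        have hs := hstep ⟨m, hm⟩
        simp only [Fin.val_mk] at hs
        rw [hs]
        have hjm' : (j : ℕ) ≤ m := Nat.lt_succ_iff.mp h
        have hYz : Y ⟨m, hm⟩ j = 0 := hY _ _ (by simpa [Fin.le_def] using hjm')
        simp only [Matrix.add_apply, vecMulVec_apply, hYz, mul_zero, add_zero]
        exact ih hjm' (le_of_lt hmn) k
      · have : (j : ℕ) = m + 1 := le_antisymm hjm h
        rw [this]
  have key : ∀ m, m ≤ n → ∀ k j, Xs m k j =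
      X k j + ∑ i ∈ Finset.univ.filter (fun i : Fin n => (i : ℕ) < m),
        Xs n k i * Y i j := by
    intro m
    induction m with
    | zero => intro _ k j; simp [h0]
    | succ m ih =>
      intro hmn k j
      have hm : m < n := hmn
      have hs := hstep ⟨m, hm⟩
      simp only [Fin.val_mk] at hs
      rw [hs]
      simp only [Matrix.add_apply, vecMulVec_apply]
      rw [ih (le_of_lt hm)]
      have hstabm : Xs m k ⟨m, hm⟩ = Xs n k ⟨m, hm⟩ := by
        rw [stab ⟨m, hm⟩ m le_rfl (le_of_lt hm), stab ⟨m, hm⟩ n (le_of_lt hm) le_rfl]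
      have hsplit : Finset.univ.filter (fun i : Fin n => (i : ℕ) < m + 1)
          = insert ⟨m, hm⟩ (Finset.univ.filter fun i : Fin n => (i : ℕ) < m) := by
        ext i
        simp only [Finset.mem_filter, Finset.mem_insert, Finset.mem_univ, true_and,
          Fin.ext_iff, Fin.val_mk]
        omega
      have hnot : (⟨m, hm⟩ : Fin n) ∉
          Finset.univ.filter (fun i : Fin n => (i : ℕ) < m) := by simp
      rw [hsplit, Finset.sum_insert hnot, hstabm]
      ring
  have hmain : Xs n = X + Xs n * Y := by
    ext k j
    rw [Matrix.add_apply, Matrix.mul_apply, key n le_rfl k j]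
    congr 1
    apply Finset.sum_congr
    · ext i; simp [i.isLt]
    · intros; rfl
  have hdet : IsUnit (1 - Y).det := by
    have hBT : (1 - Y).BlockTriangular id := by
      intro i j hij
      have hij' : j < i := hij
      simp [Matrix.sub_apply, Matrix.one_apply_ne (ne_of_gt hij'),
        hY i j (le_of_lt hij')]
    rw [Matrix.det_of_upperTriangular hBT]
    simp [Matrix.sub_apply, Matrix.one_apply, fun i : Fin n => hY i i le_rfl]
  have hfac : Xs n * (1 - Y) = X := by
    rw [Matrix.mul_sub, Matrix.mul_one]
    nth_rewrite 1 [hmain]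
    exact add_sub_cancel_right X (Xs n * Y)
  rw [← hfac, Matrix.mul_assoc, Matrix.mul_nonsing_inv _ hdet, Matrix.mul_one]
end

section
/- In the setting of the Sequential Update Lemma, for indices i ≤ j ≤ k, the i-th column of X⁽ʲ⁾ equals the i-th column of X⁽ᵏ⁾; that is, once column i has been processed, it never changes again. -/
open Matrix

theorem Matrix.add_vecMulVec_apply_of_eq_zero {m n R : Type*} [NonUnitalNonAssocSemiring R]
    (M : Matrix m n R) (u : m → R) {v : n → R} (r : m) {c : n} (hv : v c = 0) :
    (M + vecMulVec u v) r c = M r c := by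
  simp [vecMulVec_apply, hv]

/-- Columns are indexed from `0`, so column `c` is processed by step `c + 1`. -/
theorem sequential_update_column_stable_general {F : Type*} [Field F] {n : ℕ}
    (Y : Matrix (Fin n) (Fin n) F)
    (hY : ∀ i j : Fin n, j ≤ i → Y i j = 0)
    (Xs : ℕ → Matrix (Fin n) (Fin n) F)
    (hstep : ∀ i : Fin n, Xs ((i : ℕ) + 1) =
      Xs (i : ℕ) + Matrix.vecMulVec (fun k => Xs (i : ℕ) k i) (fun l => Y i l))
    (c : Fin n) (j k : ℕ) (hcj : (c : ℕ) + 1 ≤ j) (hjk : j ≤ k) (hkn : k ≤ n) :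
    ∀ row : Fin n, Xs j row c = Xs k row c := by
  intro row
  induction k, hjk using Nat.le_induction with
  | base => rfl
  | succ m hjm ih =>
    let i : Fin n := ⟨m, hkn⟩
    have hci : c ≤ i := Fin.le_def.mpr (by simp only [i]; omega)
    rw [ih (Nat.le_of_succ_le hkn), show Xs (m + 1) = _ from hstep i,
      add_vecMulVec_apply_of_eq_zero _ _ _ (hY i c hci)]

/-- In the sequential-update process, once column `c` has been processed
(i.e. after step `c+1`, in 0-based indexing), it never changes again:
for steps `j, k` with `c + 1 ≤ j ≤ k ≤ n`, column `c` of `X⁽ʲ⁾` equals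
column `c` of `X⁽ᵏ⁾`. -/
theorem sequential_update_column_stable {F : Type*} [Field F] {n : ℕ}
    (X Y : Matrix (Fin n) (Fin n) F)
    (hY : ∀ i j : Fin n, j ≤ i → Y i j = 0)
    (Xs : ℕ → Matrix (Fin n) (Fin n) F)
    (h0 : Xs 0 = X)
    (hstep : ∀ i : Fin n, Xs ((i : ℕ) + 1) =
      Xs (i : ℕ) + Matrix.vecMulVec (fun k => Xs (i : ℕ) k i) (fun l => Y i l))
    (c : Fin n) (j k : ℕ) (hcj : (c : ℕ) + 1 ≤ j) (hjk : j ≤ k) (hkn : k ≤ n) :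
    ∀ row : Fin n, Xs j row c = Xs k row c :=
  sequential_update_column_stable_general Y hY Xs hstep c j k hcj hjk hkn
end
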